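/- Let H be a Hopf algebra and A a right partial H^op-module algebra with right partial smash product H^op#A. The map φ₀ : A → H^op#A, a ↦ 1_H#a, is an injective algebra homomorphism. -/
import Mathlib


open TensorProduct

section Smash

variable {k H A : Type*} [CommRing k] [Ring H] [HopfAlgebra k H] [Ring A] [Algebra k A]

/-- The smash-type multiplication on `H ⊗ A` associated to a bilinear multiplication
`mH` on `H` (e.g. the given or the opposite one) and a right action-type map
`ract : A →ₗ H →ₗ A`:  on pure tensors,
`(g ⊗ b)(h ⊗ a) = Σ mH g h₍₁₎ ⊗ (b·h₍₂₎) a`. -/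
noncomputable def rsmashMul (mH : H →ₗ[k] H →ₗ[k] H) (ract : A →ₗ[k] H →ₗ[k] A) :
    (H ⊗[k] A) ⊗[k] (H ⊗[k] A) →ₗ[k] H ⊗[k] A :=
  (TensorProduct.map (TensorProduct.lift mH)
      ((LinearMap.mul' k A) ∘ₗ (LinearMap.rTensor A (TensorProduct.lift ract)) ∘ₗ
        (TensorProduct.assoc k A H A).symm.toLinearMap)) ∘ₗ
  (TensorProduct.tensorTensorTensorComm k H A H (H ⊗[k] A)).toLinearMap ∘ₗ
  (LinearMap.lTensor (H ⊗[k] A)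
      ((TensorProduct.assoc k H H A).toLinearMap ∘ₗ
        (LinearMap.rTensor A (Coalgebra.comul (R := k)))))

/-- The curried (bilinear) form of the smash-type multiplication. -/
noncomputable def rsmashMul₂ (mH : H →ₗ[k] H →ₗ[k] H) (ract : A →ₗ[k] H →ₗ[k] A) :
    (H ⊗[k] A) →ₗ[k] (H ⊗[k] A) →ₗ[k] H ⊗[k] A :=
  TensorProduct.curry (rsmashMul mH ract)

/-- The right partial smash product `H # A := (1_H ⊗ 1_A)(H ⊗ A)`, spanned by the
elements `h # a := (1 ⊗ 1)(h ⊗ a) = Σ h₍₁₎ ⊗ (1·h₍₂₎)a`. -/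
noncomputable def rsmashSub (mH : H →ₗ[k] H →ₗ[k] H) (ract : A →ₗ[k] H →ₗ[k] A) :
    Submodule k (H ⊗[k] A) :=
  Submodule.span k
    {z | ∃ (h : H) (a : A), z = rsmashMul₂ mH ract ((1 : H) ⊗ₜ (1 : A)) (h ⊗ₜ a)}

end Smash

/-- Sweedler-style sum `h ↦ Σ f(h₍₁₎) * g(h₍₂₎)`. -/
noncomputable def sweedler {k H B : Type*} [CommRing k] [Ring H] [HopfAlgebra k H]
    [AddCommGroup B] [Module k B]
    (mul : B →ₗ[k] B →ₗ[k] B) (f g : H →ₗ[k] B) : H →ₗ[k] B :=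
  TensorProduct.lift ((mul ∘ₗ f).compl₂ g) ∘ₗ Coalgebra.comul

/-- Coopposite Sweedler sum `h ↦ Σ f(h₍₂₎) * g(h₍₁₎)` (Sweedler sum for `Δᶜᵒᵖ = τ ∘ Δ`). -/
noncomputable def sweedlerCoop {k H B : Type*} [CommRing k] [Ring H] [HopfAlgebra k H]
    [AddCommGroup B] [Module k B]
    (mul : B →ₗ[k] B →ₗ[k] B) (f g : H →ₗ[k] B) : H →ₗ[k] B :=
  TensorProduct.lift ((mul ∘ₗ f).compl₂ g) ∘ₗ
    (TensorProduct.comm k H H).toLinearMap ∘ₗ Coalgebra.comul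

/-- A symmetric right partial action of the opposite Hopf algebra `H^op` on `A`
(the multiplication of `H^op` is `x ·op y = y * x`, the comultiplication is that of `H`):
(RPA1) `a·1 = a`; (RPA2) `(ab)·h = (a·h₍₁₎)(b·h₍₂₎)`;
(RPA3) `(a·g)·h = (a·(g ·op h₍₁₎))(1·h₍₂₎) = (1·h₍₁₎)(a·(g ·op h₍₂₎))`. -/
structure IsRightPartialActionOp (k : Type*) {H A : Type*} [CommRing k] [Ring H]
    [HopfAlgebra k H] [Ring A] [Algebra k A] (ract : A →ₗ[k] H →ₗ[k] A) : Prop where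
  rpa1 : ∀ a : A, ract a 1 = a
  rpa2 : ∀ (a b : A) (h : H),
    ract (a * b) h = sweedler (LinearMap.mul k A) (ract a) (ract b) h
  rpa3 : ∀ (a : A) (g h : H),
    ract (ract a g) h =
      sweedler (LinearMap.mul k A) ((ract a) ∘ₗ LinearMap.mulRight k g) (ract 1) h
  rpa3' : ∀ (a : A) (g h : H),
    ract (ract a g) h =
      sweedler (LinearMap.mul k A) (ract 1) ((ract a) ∘ₗ LinearMap.mulRight k g) h

section OpSmash

variable {k H A : Type*} [CommRing k] [Ring H] [HopfAlgebra k H] [Ring A] [Algebra k A]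

/-- The multiplication of the right partial smash product `H^op # A`:
`(g⊗b)(h⊗a) = Σ (g ·op h₍₁₎) ⊗ (b·h₍₂₎)a = Σ h₍₁₎g ⊗ (b·h₍₂₎)a`. -/
noncomputable def opSmashMul₂ (ract : A →ₗ[k] H →ₗ[k] A) :
    (H ⊗[k] A) →ₗ[k] (H ⊗[k] A) →ₗ[k] H ⊗[k] A :=
  rsmashMul₂ (LinearMap.mul k H).flip ract

/-- The right partial smash product `H^op # A = (1⊗1)(H^op⊗A)` as a subspace of `H ⊗ A`. -/
noncomputable def opSmashSub (ract : A →ₗ[k] H →ₗ[k] A) : Submodule k (H ⊗[k] A) :=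
  rsmashSub (LinearMap.mul k H).flip ract

/-- `φ₀ : A → H^op # A`, `a ↦ 1_H # a`. -/
noncomputable def opSmashPhi0 (ract : A →ₗ[k] H →ₗ[k] A) : A →ₗ[k] H ⊗[k] A :=
  (opSmashMul₂ ract ((1 : H) ⊗ₜ (1 : A))) ∘ₗ (TensorProduct.mk k H A (1 : H))

/-- `γ₀ : H^opcop → H^op # A`, `h ↦ h # 1_A`. -/
noncomputable def opSmashGamma0 (ract : A →ₗ[k] H →ₗ[k] A) : H →ₗ[k] H ⊗[k] A :=
  (opSmashMul₂ ract ((1 : H) ⊗ₜ (1 : A))) ∘ₗ ((TensorProduct.mk k H A).flip (1 : A))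

end OpSmash


private lemma rsmash_key {k H A : Type*} [CommRing k] [Ring H] [HopfAlgebra k H]
    [Ring A] [Algebra k A]
    (mH : H →ₗ[k] H →ₗ[k] H) (ract : A →ₗ[k] H →ₗ[k] A) (g : H) (b a : A) :
    rsmashMul₂ mH ract (g ⊗ₜ b) ((1 : H) ⊗ₜ a) = mH g 1 ⊗ₜ (ract b 1 * a) := by
  simp [rsmashMul₂, rsmashMul, Bialgebra.comul_one, Algebra.TensorProduct.one_def]

private lemma opSmashPhi0_eq {k H A : Type*} [CommRing k] [Ring H] [HopfAlgebra k H]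
    [Ring A] [Algebra k A] (ract : A →ₗ[k] H →ₗ[k] A)
    (h1 : ∀ a : A, ract a 1 = a) (a : A) :
    opSmashPhi0 ract a = (1 : H) ⊗ₜ a := by
  have := rsmash_key (LinearMap.mul k H).flip ract (1 : H) (1 : A) a
  simp only [opSmashPhi0, opSmashMul₂, LinearMap.comp_apply, TensorProduct.mk_apply,
    this, LinearMap.flip_apply, LinearMap.mul_apply', one_mul, h1]

/-- For a right partial `H^op`-module algebra `A`, the map
`φ₀ : A → H^op # A`, `a ↦ 1_H # a`, is an injective algebra homomorphism (it is
`k`-linear, injective, multiplicative, unital, and lands in the smash product). -/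
theorem opSmashPhi0_injective_algebra_hom
    {k H A : Type*} [CommRing k] [Ring H] [HopfAlgebra k H] [Ring A] [Algebra k A]
    (ract : A →ₗ[k] H →ₗ[k] A) (hract : IsRightPartialActionOp k ract) :
    Function.Injective (opSmashPhi0 ract) ∧
    (∀ a : A, opSmashPhi0 ract a ∈ opSmashSub ract) ∧
    (opSmashPhi0 ract 1 =
      opSmashMul₂ ract ((1 : H) ⊗ₜ (1 : A)) ((1 : H) ⊗ₜ (1 : A))) ∧
    (∀ a b : A, opSmashPhi0 ract (a * b) =
      opSmashMul₂ ract (opSmashPhi0 ract a) (opSmashPhi0 ract b)) := by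
  refine ⟨?_, ?_, rfl, ?_⟩
  · intro a b hab
    rw [opSmashPhi0_eq ract hract.rpa1, opSmashPhi0_eq ract hract.rpa1] at hab
    have := congrArg ((TensorProduct.lid k A).toLinearMap ∘ₗ
      LinearMap.rTensor A (Coalgebra.counit (R := k))) hab
    simpa [Bialgebra.counit_one] using this
  · intro a
    exact Submodule.subset_span ⟨1, a, rfl⟩
  · intro a b
    rw [opSmashPhi0_eq ract hract.rpa1, opSmashPhi0_eq ract hract.rpa1,
      opSmashPhi0_eq ract hract.rpa1, opSmashMul₂,
      rsmash_key (LinearMap.mul k H).flip ract 1 a b]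
    simp [hract.rpa1 a]
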